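/- arXiv:2405.08652 — 4 statements merged into one kernel-verified Lean document; each statement's English description precedes it below -/
import Mathlib

section
/- Let d ≥ 2 be an integer, 1 < α < 2, 0 < γ ≤ 2, and let β ∈ (αγ/2, d+γ]. There exists a constant K > 0, depending only on d, α, γ, β, such that for every nonnegative f ∈ C_c(ℝ^{d+1}), every (t,x) ∈ ℝ × ℝ^d and every ρ > 0, P_γ(1_{C_ρ(t,x)^c} f)(t,x) ≤ K ρ^{αγ/2 − β} M_β f(t,x). -/
/-!
Decompose the complement of `C_ρ(t,x)` in the future half-space into the parabolic annuli
`C_{2^{k+1}ρ} \ C_{2^kρ}`. On the `k`-th annulus the kernel is at most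
`(2^{k+1}ρ)^{αγ/2} (2^kρ)^{-(d+α)}`, and the integral of `f` over `C_{2^{k+1}ρ}` is at most
`|C_{2^{k+1}ρ}| (2^{k+1}ρ)^{-β} M_β f`. As `|C_R| ≍ R^{d+α}`, the `k`-th annulus contributes
`≲ (2^{k+1}ρ)^{αγ/2-β} M_β f`, a geometric series because `αγ/2 < β`. No measurability of `f` is
needed: the sum over annuli is taken with the subadditivity of `∫⁻` over a countable union.
-/

open MeasureTheory ENNReal Set Filter

noncomputable section

/-- The spatial space `ℝ^d`. -/
abbrev Spc (d : ℕ) := EuclideanSpace ℝ (Fin d)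

/-- Parabolic cylinder `C_ρ(t,x) = {(s,y) : t ≤ s ≤ t + ρ^α, |y - x| ≤ ρ}`. -/
def cylP (d : ℕ) (α ρ t : ℝ) (x : Spc d) : Set (ℝ × Spc d) :=
  {p | t ≤ p.1 ∧ p.1 ≤ t + ρ ^ α ∧ dist p.2 x ≤ ρ}

/-- Average of `f` over the parabolic cylinder `C_ρ(t,x)`. -/
def cylAvg (d : ℕ) (α ρ t : ℝ) (x : Spc d) (f : ℝ × Spc d → ℝ≥0∞) : ℝ≥0∞ :=
  (volume (cylP d α ρ t x))⁻¹ * ∫⁻ p in cylP d α ρ t x, f p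

/-- Parabolic Morrey norm `‖v‖_{E_q}`. -/
def morreyE (d : ℕ) (α q : ℝ) (v : ℝ × Spc d → ℝ≥0∞) : ℝ≥0∞ :=
  ⨆ (ρ : ℝ) (_ : 0 < ρ) (t : ℝ) (x : Spc d),
    ENNReal.ofReal ρ * (cylAvg d α ρ t x (fun p => v p ^ q)) ^ (1 / q)

/-- Elliptic Morrey norm `‖w‖_{M_q}` on `ℝ^d`. -/
def morreyM (d : ℕ) (q : ℝ) (w : Spc d → ℝ≥0∞) : ℝ≥0∞ :=
  ⨆ (ρ : ℝ) (_ : 0 < ρ) (x : Spc d),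
    ENNReal.ofReal ρ *
      ((volume (Metric.closedBall x ρ))⁻¹ *
        ∫⁻ y in Metric.closedBall x ρ, w y ^ q) ^ (1 / q)

/-- Fractional (parabolic) maximal function `M_β f(t,x)`. -/
def maxFun (d : ℕ) (α β : ℝ) (f : ℝ × Spc d → ℝ≥0∞) (t : ℝ) (x : Spc d) : ℝ≥0∞ :=
  ⨆ (ρ : ℝ) (_ : 0 < ρ), ENNReal.ofReal (ρ ^ β) * cylAvg d α ρ t x f

/-- Uncentered parabolic maximal function `M̂ f(z)`, sup over all parabolic
cylinders containing `z`. -/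
def hatM (d : ℕ) (α : ℝ) (f : ℝ × Spc d → ℝ≥0∞) (z : ℝ × Spc d) : ℝ≥0∞ :=
  ⨆ (ρ : ℝ) (_ : 0 < ρ) (t : ℝ) (x : Spc d) (_ : z ∈ cylP d α ρ t x),
    cylAvg d α ρ t x f

/-- The kernel `p_γ(s,y) = 1_{s>0} s^{γ/2} min(|y|^{-d-α}, s^{-(d+α)/α})`. -/
def pKer (d : ℕ) (α γ : ℝ) (s : ℝ) (y : Spc d) : ℝ≥0∞ :=
  if 0 < s then
    (if s ^ (1 / α) ≤ ‖y‖ then ENNReal.ofReal (s ^ (γ / 2) * ‖y‖ ^ (-(d : ℝ) - α))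
     else ENNReal.ofReal (s ^ (γ / 2 - ((d : ℝ) + α) / α)))
  else 0

/-- `P_γ f(t,x) = ∫ p_γ(s,y) f(t+s, x+y) dy ds`. -/
def Pop (d : ℕ) (α γ : ℝ) (f : ℝ × Spc d → ℝ≥0∞) (t : ℝ) (x : Spc d) : ℝ≥0∞ :=
  ∫⁻ p : ℝ × Spc d, pKer d α γ p.1 p.2 * f (t + p.1, x + p.2)

/-- `P*_γ f(t,x) = ∫ p_γ(s,y) f(t-s, x+y) dy ds`. -/
def PopStar (d : ℕ) (α γ : ℝ) (f : ℝ × Spc d → ℝ≥0∞) (t : ℝ) (x : Spc d) : ℝ≥0∞ :=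
  ∫⁻ p : ℝ × Spc d, pKer d α γ p.1 p.2 * f (t - p.1, x + p.2)



open Metric

section FarField

variable {d : ℕ} {α : ℝ}

lemma mem_cylP_zero {R : ℝ} {p : ℝ × Spc d} :
    p ∈ cylP d α R 0 0 ↔ 0 ≤ p.1 ∧ p.1 ≤ R ^ α ∧ ‖p.2‖ ≤ R := by
  simp [cylP]

lemma preimage_add_cylP (R t : ℝ) (x : Spc d) :
    (((t, x) : ℝ × Spc d) + ·) ⁻¹' cylP d α R t x = cylP d α R 0 0 := by
  ext p
  simp [cylP, dist_eq_norm]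

lemma cylP_eq_prod (R t : ℝ) (x : Spc d) :
    cylP d α R t x = Icc t (t + R ^ α) ×ˢ closedBall x R := by
  ext p
  simp [cylP, and_assoc]

lemma measurableSet_cylP (R t : ℝ) (x : Spc d) : MeasurableSet (cylP d α R t x) := by
  rw [cylP_eq_prod]
  exact measurableSet_Icc.prod measurableSet_closedBall

lemma volume_cylP {R : ℝ} (hR : 0 < R) (t : ℝ) (x : Spc d) :
    volume (cylP d α R t x) = ENNReal.ofReal (R ^ (α + d)) * volume (ball (0 : Spc d) 1) := by
  rw [cylP_eq_prod, Measure.volume_eq_prod, Measure.prod_prod, Real.volume_Icc,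
    Measure.addHaar_closedBall volume x hR.le, add_sub_cancel_left, finrank_euclideanSpace_fin,
    ← mul_assoc, ← ENNReal.ofReal_mul (by positivity),
    ← Real.rpow_natCast, ← Real.rpow_add hR]

lemma setLIntegral_cylP_le_maxFun (β : ℝ) {R : ℝ} (hR : 0 < R) (t : ℝ) (x : Spc d)
    (F : ℝ × Spc d → ℝ≥0∞) :
    ∫⁻ w in cylP d α R t x, F w ≤
      volume (cylP d α R t x) * ENNReal.ofReal (R ^ (-β)) * maxFun d α β F t x := by
  have hvol0 : volume (cylP d α R t x) ≠ 0 := by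
    rw [volume_cylP hR]
    exact mul_ne_zero (ENNReal.ofReal_pos.2 (by positivity)).ne'
      (measure_ball_pos _ _ one_pos).ne'
  have hvol_top : volume (cylP d α R t x) ≠ ⊤ := by
    rw [volume_cylP hR]
    exact ENNReal.mul_ne_top ENNReal.ofReal_ne_top measure_ball_lt_top.ne
  have hRβ : ENNReal.ofReal (R ^ (-β)) * ENNReal.ofReal (R ^ β) = 1 := by
    rw [← ENNReal.ofReal_mul (by positivity), ← Real.rpow_add hR, neg_add_cancel,
      Real.rpow_zero, ENNReal.ofReal_one]
  calc ∫⁻ w in cylP d α R t x, F w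
      = volume (cylP d α R t x) * ENNReal.ofReal (R ^ (-β)) *
          (ENNReal.ofReal (R ^ β) * cylAvg d α R t x F) := by
        rw [cylAvg, mul_assoc, ← mul_assoc (ENNReal.ofReal _), hRβ, one_mul, ← mul_assoc,
          ENNReal.mul_inv_cancel hvol0 hvol_top, one_mul]
    _ ≤ _ := by
        gcongr
        exact le_iSup₂_of_le R hR le_rfl

/- `p_γ(s, y) = s^{γ/2} max(|y|, s^{1/α})^{-(d+α)}` for `s > 0`, and the hypothesis `hout` says
that this maximum exceeds `r`. -/
lemma pKer_le_of_lt {γ r s : ℝ} {y : Spc d} (hα : 0 < α) (hr : 0 < r) (hs : 0 < s)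
    (hout : r ^ α < s ∨ r < ‖y‖) :
    pKer d α γ s y ≤ ENNReal.ofReal (s ^ (γ / 2) * r ^ (-((d : ℝ) + α))) := by
  have hexp : -((d : ℝ) + α) ≤ 0 := by linarith [d.cast_nonneg (α := ℝ)]
  have hrs : r ^ α < s ↔ r < s ^ (1 / α) := by
    rw [one_div, Real.lt_rpow_inv_iff_of_pos hr.le hs.le hα]
  rw [pKer, if_pos hs]
  split_ifs with hy
  · have hry : r ≤ ‖y‖ := hout.elim (fun h => (hrs.1 h).le.trans hy) le_of_lt
    refine ENNReal.ofReal_le_ofReal (mul_le_mul_of_nonneg_left ?_ (by positivity))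
    rw [← neg_add']
    exact Real.rpow_le_rpow_of_nonpos hr hry hexp
  · rw [not_le] at hy
    have hrs' : r < s ^ (1 / α) := hout.elim hrs.1 (fun h => h.trans hy)
    refine ENNReal.ofReal_le_ofReal ?_
    calc s ^ (γ / 2 - (d + α) / α) = s ^ (γ / 2) * (s ^ (1 / α)) ^ (-((d : ℝ) + α)) := by
          rw [← Real.rpow_mul hs.le, ← Real.rpow_add hs]
          congr 1
          ring
      _ ≤ _ := mul_le_mul_of_nonneg_left (Real.rpow_le_rpow_of_nonpos hr hrs'.le hexp)
          (by positivity)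

lemma pKer_le_of_mem_diff_cylP {γ r : ℝ} {p : ℝ × Spc d} (hα : 0 < α) (hγ : 0 ≤ γ)
    (hr : 0 < r) (hp : p ∈ cylP d α (2 * r) 0 0 \ cylP d α r 0 0) :
    pKer d α γ p.1 p.2 ≤
      ENNReal.ofReal ((2 * r) ^ (α * γ / 2) * r ^ (-((d : ℝ) + α))) := by
  obtain ⟨hp₂, hp₁⟩ := hp
  rw [mem_cylP_zero] at hp₂ hp₁
  obtain ⟨hs₀, hs, -⟩ := hp₂
  rcases hs₀.eq_or_lt with hs_eq | hs_pos
  · simp [pKer, ← hs_eq]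
  have hout : r ^ α < p.1 ∨ r < ‖p.2‖ := by
    by_contra! h
    exact hp₁ ⟨hs₀, h.1, h.2⟩
  refine (pKer_le_of_lt hα hr hs_pos hout).trans (ENNReal.ofReal_le_ofReal ?_)
  gcongr
  calc p.1 ^ (γ / 2) ≤ ((2 * r) ^ α) ^ (γ / 2) := by gcongr
    _ = (2 * r) ^ (α * γ / 2) := by rw [← Real.rpow_mul (by positivity), mul_div_assoc]

lemma exists_mem_cylP_two_pow_mul {ρ : ℝ} {p : ℝ × Spc d} (hα : 0 < α) (hρ : 0 < ρ)
    (hp : 0 ≤ p.1) : ∃ k : ℕ, p ∈ cylP d α (2 ^ k * ρ) 0 0 := by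
  have hR : Tendsto (fun k : ℕ => (2 : ℝ) ^ k * ρ) atTop atTop :=
    (tendsto_pow_atTop_atTop_of_one_lt (one_lt_two : (1 : ℝ) < 2)).atTop_mul_const hρ
  obtain ⟨k, hk₁, hk₂⟩ := (((tendsto_rpow_atTop hα).comp hR).eventually_ge_atTop p.1).and
    (hR.eventually_ge_atTop ‖p.2‖) |>.exists
  exact ⟨k, mem_cylP_zero.2 ⟨hp, hk₁, hk₂⟩⟩

lemma setLIntegral_diff_cylP_le (β : ℝ) {γ r : ℝ} (hα : 0 < α) (hγ : 0 ≤ γ) (hr : 0 < r)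
    (F : ℝ × Spc d → ℝ≥0∞) (t : ℝ) (x : Spc d) :
    ∫⁻ p in cylP d α (2 * r) 0 0 \ cylP d α r 0 0, pKer d α γ p.1 p.2 * F ((t, x) + p) ≤
      ENNReal.ofReal (2 ^ ((d : ℝ) + α) * (2 * r) ^ (α * γ / 2 - β)) *
        volume (ball (0 : Spc d) 1) * maxFun d α β F t x := by
  have hconst : (2 * r) ^ (α * γ / 2) * r ^ (-((d : ℝ) + α)) * (2 * r) ^ (α + d) *
      (2 * r) ^ (-β) = 2 ^ ((d : ℝ) + α) * (2 * r) ^ (α * γ / 2 - β) := by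
    rw [Real.rpow_neg hr.le, Real.rpow_neg (by positivity), Real.rpow_sub (by positivity),
      add_comm α]
    field_simp
    rw [Real.mul_rpow two_pos.le hr.le]
    ring
  set B := ENNReal.ofReal ((2 * r) ^ (α * γ / 2) * r ^ (-((d : ℝ) + α))) with hB
  calc ∫⁻ p in cylP d α (2 * r) 0 0 \ cylP d α r 0 0, pKer d α γ p.1 p.2 * F ((t, x) + p)
      ≤ ∫⁻ p in cylP d α (2 * r) 0 0, B * F ((t, x) + p) := by
        refine (setLIntegral_mono' ((measurableSet_cylP _ _ _).diff (measurableSet_cylP _ _ _))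
          fun p hp => ?_).trans (lintegral_mono_set sdiff_subset)
        gcongr
        exact pKer_le_of_mem_diff_cylP hα hγ hr hp
    _ = B * ∫⁻ w in cylP d α (2 * r) t x, F w := by
        have : (volume : Measure (ℝ × Spc d)).IsAddLeftInvariant := by
          rw [Measure.volume_eq_prod]; infer_instance
        rw [MeasureTheory.lintegral_const_mul' _ _ ENNReal.ofReal_ne_top,
          ← preimage_add_cylP (2 * r) t x,
          (measurePreserving_add_left volume ((t, x) : ℝ × Spc d)).setLIntegral_comp_preimage_emb
            (MeasurableEquiv.addLeft _).measurableEmbedding]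
    _ ≤ B * (volume (cylP d α (2 * r) t x) * ENNReal.ofReal ((2 * r) ^ (-β)) *
          maxFun d α β F t x) := by
        gcongr
        exact setLIntegral_cylP_le_maxFun β (by positivity) t x F
    _ = _ := by
        rw [hB, volume_cylP (by positivity), ← hconst]
        simp (disch := positivity) only [ENNReal.ofReal_mul]
        ring

def farFieldConst (d : ℕ) (α γ β : ℝ) : ℝ :=
  2 ^ ((d : ℝ) + α) * (2 ^ (α * γ / 2 - β) / (1 - 2 ^ (α * γ / 2 - β))) *
    (volume (ball (0 : Spc d) 1)).toReal

lemma farFieldConst_pos {γ β : ℝ} (hβ : α * γ / 2 < β) : 0 < farFieldConst d α γ β := by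
  have hq : (2 : ℝ) ^ (α * γ / 2 - β) < 1 :=
    Real.rpow_lt_one_of_one_lt_of_neg one_lt_two (by linarith)
  have hV : 0 < (volume (ball (0 : Spc d) 1)).toReal :=
    ENNReal.toReal_pos (measure_ball_pos _ _ one_pos).ne' measure_ball_lt_top.ne
  unfold farFieldConst
  have : 0 < 1 - (2 : ℝ) ^ (α * γ / 2 - β) := by linarith
  positivity

lemma hasSum_two_mul_two_pow_mul_rpow {e ρ : ℝ} (he : e < 0) (hρ : 0 < ρ) :
    HasSum (fun k : ℕ => (2 * (2 ^ k * ρ)) ^ e) (2 ^ e / (1 - 2 ^ e) * ρ ^ e) := by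
  have hq : (2 : ℝ) ^ e < 1 := Real.rpow_lt_one_of_one_lt_of_neg one_lt_two he
  have hterm : ∀ k : ℕ, (2 * (2 ^ k * ρ)) ^ e = 2 ^ e * ρ ^ e * (2 ^ e) ^ k := fun k => by
    rw [← mul_assoc, ← pow_succ', Real.mul_rpow (by positivity) hρ.le,
      ← Real.rpow_natCast_mul two_pos.le, mul_comm _ e, Real.rpow_mul_natCast two_pos.le,
      pow_succ']
    ring
  simp_rw [hterm, div_eq_mul_inv, mul_right_comm _ _ (ρ ^ e)]
  exact (hasSum_geometric_of_lt_one (by positivity) hq).mul_left (2 ^ e * ρ ^ e)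

theorem Pop_indicator_compl_cylP_le {γ β ρ : ℝ} (hα : 0 < α) (hγ : 0 ≤ γ)
    (hβ : α * γ / 2 < β) (hρ : 0 < ρ) (F : ℝ × Spc d → ℝ≥0∞) (t : ℝ)
    (x : Spc d) :
    Pop d α γ ((cylP d α ρ t x)ᶜ.indicator F) t x ≤
      ENNReal.ofReal (farFieldConst d α γ β * ρ ^ (α * γ / 2 - β)) *
        maxFun d α β F t x := by
  set A : ℕ → Set (ℝ × Spc d) :=
    fun k => cylP d α (2 * (2 ^ k * ρ)) 0 0 \ cylP d α (2 ^ k * ρ) 0 0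
  let g : ℝ × Spc d → ℝ≥0∞ := fun p =>
    pKer d α γ p.1 p.2 * (cylP d α ρ t x)ᶜ.indicator F ((t, x) + p)
  have hsum := hasSum_two_mul_two_pow_mul_rpow (sub_neg.2 hβ) hρ
  have hsupp : g.support ⊆ ⋃ k, A k := by
    intro p hp
    have hs : 0 < p.1 := by
      by_contra h
      simp [g, pKer, h] at hp
    have hp₀ : p ∉ cylP d α (2 ^ 0 * ρ) 0 0 := by
      rw [pow_zero, one_mul, ← preimage_add_cylP ρ t x]
      intro h
      have h' : (t, x) + p ∈ cylP d α ρ t x := h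
      simp [g, indicator_of_notMem (notMem_compl_iff.2 h')] at hp
    obtain ⟨k, hk, hk₁⟩ := Nat.exists_not_and_succ_of_not_zero_of_exists hp₀
      (exists_mem_cylP_two_pow_mul hα hρ hs.le)
    exact mem_iUnion.2 ⟨k, by rwa [pow_succ', mul_assoc] at hk₁, hk⟩
  calc Pop d α γ ((cylP d α ρ t x)ᶜ.indicator F) t x
      = ∫⁻ p in ⋃ k, A k, g p := (setLIntegral_eq_of_support_subset hsupp).symm
    _ ≤ ∑' k, ∫⁻ p in A k, g p := lintegral_iUnion_le _ _
    _ ≤ ∑' k, ∫⁻ p in A k, pKer d α γ p.1 p.2 * F ((t, x) + p) := by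
        gcongr with k p
        exact mul_le_mul_right (indicator_le_self _ F _) _
    _ ≤ ∑' k, ENNReal.ofReal (2 ^ ((d : ℝ) + α) * (2 * (2 ^ k * ρ)) ^ (α * γ / 2 - β)) *
          volume (ball (0 : Spc d) 1) * maxFun d α β F t x :=
        ENNReal.tsum_le_tsum fun k => setLIntegral_diff_cylP_le β hα hγ (by positivity) F t x
    _ = ENNReal.ofReal (farFieldConst d α γ β * ρ ^ (α * γ / 2 - β)) *
          maxFun d α β F t x := by
        rw [ENNReal.tsum_mul_right, ENNReal.tsum_mul_right,
          ← ENNReal.ofReal_tsum_of_nonneg (fun k => by positivity) (hsum.summable.mul_left _),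
          tsum_mul_left, hsum.tsum_eq,
          ← ENNReal.ofReal_toReal (measure_ball_lt_top (x := (0 : Spc d)) (r := 1)).ne,
          ← ENNReal.ofReal_mul (mul_nonneg (by positivity) (hsum.nonneg fun k => by positivity)),
          farFieldConst]
        ring_nf

end FarField

theorem stmt_1_general (d : ℕ) (α γ β : ℝ) (hα1 : 1 < α)
    (hγ1 : 0 < γ) (hβ1 : α * γ / 2 < β) :
    ∃ K : ℝ, 0 < K ∧
      ∀ (f : ℝ × Spc d → ℝ), Continuous f → HasCompactSupport f → (∀ z, 0 ≤ f z) →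
      ∀ (t : ℝ) (x : Spc d) (ρ : ℝ), 0 < ρ →
      Pop d α γ
          (fun z => Set.indicator (cylP d α ρ t x)ᶜ (fun w => ENNReal.ofReal (f w)) z) t x ≤
        ENNReal.ofReal (K * ρ ^ (α * γ / 2 - β)) *
          maxFun d α β (fun z => ENNReal.ofReal (f z)) t x :=
  ⟨farFieldConst d α γ β, farFieldConst_pos hβ1, fun f _ _ _ t x ρ hρ =>
    Pop_indicator_compl_cylP_le (by linarith) hγ1.le hβ1 hρ _ t x⟩

/-- far-field bound for `P_γ` applied to `f` cut off outside the cylinder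
`C_ρ(t,x)`: `P_γ(1_{C_ρ(t,x)^c} f)(t,x) ≤ K ρ^{αγ/2 - β} M_β f(t,x)`. -/
theorem stmt_1 (d : ℕ) (hd : 2 ≤ d) (α γ β : ℝ) (hα1 : 1 < α) (hα2 : α < 2)
    (hγ1 : 0 < γ) (hγ2 : γ ≤ 2) (hβ1 : α * γ / 2 < β) (hβ2 : β ≤ d + γ) :
    ∃ K : ℝ, 0 < K ∧
      ∀ (f : ℝ × Spc d → ℝ), Continuous f → HasCompactSupport f → (∀ z, 0 ≤ f z) →
      ∀ (t : ℝ) (x : Spc d) (ρ : ℝ), 0 < ρ →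
      Pop d α γ
          (fun z => Set.indicator (cylP d α ρ t x)ᶜ (fun w => ENNReal.ofReal (f w)) z) t x ≤
        ENNReal.ofReal (K * ρ ^ (α * γ / 2 - β)) *
          maxFun d α β (fun z => ENNReal.ofReal (f z)) t x :=
  stmt_1_general d α γ β hα1 hγ1 hβ1
end
end

section
/- Let d ≥ 2 be an integer, 1 < α < 2, 0 < γ ≤ 2, and β > αγ/2. There exists a constant K > 0, depending only on d, α, γ, β, such that for every nonnegative f ∈ C_c(ℝ^{d+1}) and every ρ > 0, ∫∫_{{(s,y) : 0 ≤ s ≤ |y|^α, |y| ≥ ρ}} |y|^{αγ/2 − d − α} f(s,y) dy ds ≤ K ρ^{αγ/2 − β} M_β f(0,0). -/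
open MeasureTheory ENNReal Set Filter

noncomputable section

private lemma rpow_helper (ρ A B : ℝ) (hρ : 0 < ρ) (j : ℕ) :
    ((2:ℝ)^j * ρ) ^ A * ((2:ℝ)^(j+1) * ρ) ^ B
      = (2:ℝ) ^ B * ((2:ℝ) ^ (A+B)) ^ j * ρ ^ (A+B) := by
  have h2 : (0:ℝ) < 2 := by norm_num
  have h2j : (0:ℝ) ≤ (2:ℝ)^j := by positivity
  have key : ∀ C : ℝ, ((2:ℝ)^j : ℝ) ^ C = ((2:ℝ) ^ C) ^ j := by
    intro C
    rw [← Real.rpow_natCast (2:ℝ) j, ← Real.rpow_mul h2.le,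
        ← Real.rpow_natCast ((2:ℝ)^C) j, ← Real.rpow_mul h2.le, mul_comm]
  rw [Real.mul_rpow h2j hρ.le, pow_succ, Real.mul_rpow (by positivity) hρ.le,
      Real.mul_rpow h2j h2.le, key A, key B, Real.rpow_add h2 A B,
      Real.rpow_add hρ A B, mul_pow]
  ring

/-- far-field estimate over the region `Q ∩ C_ρ(0,0)^c`, where
`Q = {(s,y) : |y| ≥ s^{1/α}}`:
`∫∫_{0 ≤ s ≤ |y|^α, |y| ≥ ρ} |y|^{αγ/2-d-α} f(s,y) dy ds ≤ K ρ^{αγ/2-β} M_β f(0,0)`. -/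
theorem stmt_6 (d : ℕ) (hd : 2 ≤ d) (α γ β : ℝ) (hα1 : 1 < α) (hα2 : α < 2)
    (hγ1 : 0 < γ) (hγ2 : γ ≤ 2) (hβ : α * γ / 2 < β) :
    ∃ K : ℝ, 0 < K ∧
      ∀ (f : ℝ × Spc d → ℝ), Continuous f → HasCompactSupport f → (∀ z, 0 ≤ f z) →
      ∀ (ρ : ℝ), 0 < ρ →
      (∫⁻ z in {z : ℝ × Spc d | 0 ≤ z.1 ∧ z.1 ≤ ‖z.2‖ ^ α ∧ ρ ≤ ‖z.2‖},
          ENNReal.ofReal (‖z.2‖ ^ (α * γ / 2 - d - α) * f z)) ≤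
        ENNReal.ofReal (K * ρ ^ (α * γ / 2 - β)) *
          maxFun d α β (fun z => ENNReal.ofReal (f z)) 0 0 := by
  have hα0 : (0:ℝ) < α := by linarith
  set A : ℝ := α * γ / 2 - d - α with hA_def
  set B : ℝ := α + d - β with hB_def
  have hd2 : (2:ℝ) ≤ (d:ℝ) := by exact_mod_cast hd
  have hAB : A + B = α * γ / 2 - β := by rw [hA_def, hB_def]; ring
  have hAneg : A < 0 := by rw [hA_def]; nlinarith
  have he : A + B < 0 := by rw [hAB]; linarith
  set q : ℝ := (2:ℝ) ^ (A+B) with hq_def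
  have hq0 : 0 < q := Real.rpow_pos_of_pos two_pos _
  have hq1 : q < 1 := Real.rpow_lt_one_of_one_lt_of_neg one_lt_two he
  set v : ℝ≥0∞ := volume (Metric.ball (0:Spc d) 1) with hv_def
  have hv0 : 0 < v := Metric.measure_ball_pos _ _ one_pos
  have hvt : v ≠ ⊤ := measure_ball_lt_top.ne
  set V : ℝ := v.toReal with hV_def
  have hV0 : 0 < V := ENNReal.toReal_pos hv0.ne' hvt
  have h1q : (0:ℝ) < 1 - q := by linarith
  refine ⟨(2:ℝ)^B * (1-q)⁻¹ * V, by positivity, ?_⟩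
  intro f hfc hfs hf0 ρ hρ
  set g : ℝ × Spc d → ℝ≥0∞ := fun z => ENNReal.ofReal (f z) with hg_def
  set M : ℝ≥0∞ := maxFun d α β g 0 0 with hM_def
  set S : ℕ → Set (ℝ × Spc d) := fun j =>
    {z | 0 ≤ z.1 ∧ z.1 ≤ ‖z.2‖ ^ α ∧ (2:ℝ)^j * ρ ≤ ‖z.2‖ ∧ ‖z.2‖ < (2:ℝ)^(j+1) * ρ}
    with hS_def
  have hcover : {z : ℝ × Spc d | 0 ≤ z.1 ∧ z.1 ≤ ‖z.2‖ ^ α ∧ ρ ≤ ‖z.2‖} ⊆ ⋃ j, S j := by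
    rintro z ⟨h1, h2, h3⟩
    have hx : 1 ≤ ‖z.2‖ / ρ := (one_le_div hρ).2 h3
    obtain ⟨n, hn1, hn2⟩ := exists_nat_pow_near hx one_lt_two
    exact Set.mem_iUnion.2 ⟨n, h1, h2, (le_div_iff₀ hρ).1 hn1, (div_lt_iff₀ hρ).1 hn2⟩
  have hkey : ∀ j : ℕ, (∫⁻ z in S j, ENNReal.ofReal (‖z.2‖ ^ A * f z))
      ≤ ENNReal.ofReal ((2:ℝ)^B * ρ^(A+B)) * (ENNReal.ofReal q)^j * (v * M) := by
    intro j
    set r : ℝ := (2:ℝ)^(j+1) * ρ with hr_def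
    have hr0 : 0 < r := by positivity
    have hl0 : (0:ℝ) < (2:ℝ)^j * ρ := by positivity
    have hmeas : MeasurableSet (S j) := by
      have hnorm : Measurable fun z : ℝ × Spc d => ‖z.2‖ := measurable_snd.norm
      have hpow : Measurable fun z : ℝ × Spc d => ‖z.2‖ ^ α :=
        ((continuous_snd.norm).rpow_const (fun _ => Or.inr hα0.le)).measurable
      have : S j = {z : ℝ × Spc d | 0 ≤ z.1} ∩ ({z | z.1 ≤ ‖z.2‖ ^ α} ∩
          ({z | (2:ℝ)^j * ρ ≤ ‖z.2‖} ∩ {z | ‖z.2‖ < (2:ℝ)^(j+1) * ρ})) := rfl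
      rw [this]
      exact (measurableSet_le measurable_const measurable_fst).inter
        ((measurableSet_le measurable_fst hpow).inter
          ((measurableSet_le measurable_const hnorm).inter
            (measurableSet_lt hnorm measurable_const)))
    -- pointwise bound on S j
    have step1 : (∫⁻ z in S j, ENNReal.ofReal (‖z.2‖ ^ A * f z))
        ≤ ∫⁻ z in S j, ENNReal.ofReal (((2:ℝ)^j * ρ) ^ A) * g z := by
      refine setLIntegral_mono' hmeas fun z hz => ?_
      rw [hg_def, ← ENNReal.ofReal_mul (by positivity)]
      refine ENNReal.ofReal_le_ofReal ?_
      exact mul_le_mul_of_nonneg_right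
        (Real.rpow_le_rpow_of_nonpos hl0 hz.2.2.1 hAneg.le) (hf0 z)
    have step2 : (∫⁻ z in S j, ENNReal.ofReal (((2:ℝ)^j * ρ) ^ A) * g z)
        = ENNReal.ofReal (((2:ℝ)^j * ρ) ^ A) * ∫⁻ z in S j, g z :=
      lintegral_const_mul' _ _ ENNReal.ofReal_ne_top
    have hsub : S j ⊆ cylP d α r 0 0 := by
      rintro z ⟨h1, h2, h3, h4⟩
      refine ⟨h1, ?_, ?_⟩
      · rw [zero_add]
        exact h2.trans (Real.rpow_le_rpow (norm_nonneg _) h4.le hα0.le)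
      · rw [dist_zero_right]; exact h4.le
    have step3 : (∫⁻ z in S j, g z) ≤ ∫⁻ z in cylP d α r 0 0, g z :=
      lintegral_mono_set hsub
    -- volume of the cylinder
    have hcylset : cylP d α r 0 0 = Set.Icc (0:ℝ) (0 + r^α) ×ˢ Metric.closedBall (0:Spc d) r := by
      ext p
      simp only [cylP, Set.mem_setOf_eq, Set.mem_prod, Set.mem_Icc, Metric.mem_closedBall]
      tauto
    have hvol : volume (cylP d α r 0 0)
        = ENNReal.ofReal (r^α) * (ENNReal.ofReal (r^(d:ℕ)) * v) := by
      rw [hcylset, MeasureTheory.Measure.volume_eq_prod, Measure.prod_prod,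
          Real.volume_Icc, Measure.addHaar_closedBall _ _ hr0.le]
      simp [hv_def]
    have hvol0 : volume (cylP d α r 0 0) ≠ 0 := by
      rw [hvol]
      have h1 : (0:ℝ) < r^α := Real.rpow_pos_of_pos hr0 _
      have h2 : (0:ℝ) < r^(d:ℕ) := by positivity
      exact mul_ne_zero (ENNReal.ofReal_pos.2 h1).ne'
        (mul_ne_zero (ENNReal.ofReal_pos.2 h2).ne' hv0.ne')
    have hvolt : volume (cylP d α r 0 0) ≠ ⊤ := by
      rw [hvol]
      exact ENNReal.mul_ne_top ENNReal.ofReal_ne_top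
        (ENNReal.mul_ne_top ENNReal.ofReal_ne_top hvt)
    have havg : (∫⁻ p in cylP d α r 0 0, g p)
        = volume (cylP d α r 0 0) * cylAvg d α r 0 0 g := by
      rw [cylAvg, ← mul_assoc, ENNReal.mul_inv_cancel hvol0 hvolt, one_mul]
    have hrb0 : (0:ℝ) < r ^ β := Real.rpow_pos_of_pos hr0 _
    have hle : ENNReal.ofReal (r^β) * cylAvg d α r 0 0 g ≤ M := by
      rw [hM_def, maxFun]
      exact le_iSup₂ (f := fun ρ' (_ : 0 < ρ') =>
        ENNReal.ofReal (ρ'^β) * cylAvg d α ρ' 0 0 g) r hr0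
    have havg' : cylAvg d α r 0 0 g ≤ ENNReal.ofReal ((r^β)⁻¹) * M := by
      have hne : ENNReal.ofReal (r^β) ≠ 0 := (ENNReal.ofReal_pos.2 hrb0).ne'
      rw [ENNReal.ofReal_inv_of_pos hrb0]
      calc cylAvg d α r 0 0 g
          = (ENNReal.ofReal (r^β))⁻¹ * (ENNReal.ofReal (r^β) * cylAvg d α r 0 0 g) := by
            rw [← mul_assoc, ENNReal.inv_mul_cancel hne ENNReal.ofReal_ne_top, one_mul]
        _ ≤ (ENNReal.ofReal (r^β))⁻¹ * M := mul_le_mul_right hle _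
    -- combine
    have hfinal : ENNReal.ofReal (((2:ℝ)^j * ρ) ^ A) * (volume (cylP d α r 0 0) *
        (ENNReal.ofReal ((r^β)⁻¹) * M))
        = ENNReal.ofReal ((2:ℝ)^B * ρ^(A+B)) * (ENNReal.ofReal q)^j * (v * M) := by
      rw [hvol]
      rw [← ENNReal.ofReal_pow hq0.le, ← ENNReal.ofReal_mul (by positivity)]
      have hreal : ((2:ℝ)^j * ρ) ^ A * (r^α * (r^(d:ℕ) * (r^β)⁻¹))
          = (2:ℝ)^B * ρ^(A+B) * q^j := by
        have h1 : (r:ℝ)^(d:ℕ) = r ^ (d:ℝ) := (Real.rpow_natCast r d).symm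
        have h2 : ((r:ℝ)^β)⁻¹ = r ^ (-β) := (Real.rpow_neg hr0.le β).symm
        have h3 : r^α * (r ^ (d:ℝ) * r ^ (-β)) = r ^ B := by
          rw [← Real.rpow_add hr0, ← Real.rpow_add hr0, hB_def]
          ring_nf
        rw [h1, h2, h3, hr_def, rpow_helper ρ A B hρ j, hq_def]
        ring
      calc ENNReal.ofReal (((2:ℝ)^j * ρ) ^ A) * (ENNReal.ofReal (r^α) *
            (ENNReal.ofReal (r^(d:ℕ)) * v) * (ENNReal.ofReal ((r^β)⁻¹) * M))
          = ENNReal.ofReal (((2:ℝ)^j * ρ) ^ A * (r^α * (r^(d:ℕ) * (r^β)⁻¹))) * (v * M) := by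
            rw [ENNReal.ofReal_mul (by positivity), ENNReal.ofReal_mul (by positivity),
                ENNReal.ofReal_mul (by positivity)]
            ring
        _ = ENNReal.ofReal ((2:ℝ)^B * ρ^(A+B) * q^j) * (v * M) := by rw [hreal]
    calc (∫⁻ z in S j, ENNReal.ofReal (‖z.2‖ ^ A * f z))
        ≤ ENNReal.ofReal (((2:ℝ)^j * ρ) ^ A) * ∫⁻ z in S j, g z := step1.trans step2.le
      _ ≤ ENNReal.ofReal (((2:ℝ)^j * ρ) ^ A) * (volume (cylP d α r 0 0) *
            (ENNReal.ofReal ((r^β)⁻¹) * M)) := by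
          refine mul_le_mul_right ?_ _
          refine (step3.trans_eq havg).trans ?_
          exact mul_le_mul_right havg' _
      _ = ENNReal.ofReal ((2:ℝ)^B * ρ^(A+B)) * (ENNReal.ofReal q)^j * (v * M) := hfinal
  -- sum over annuli
  have hsum : (∑' j : ℕ, ENNReal.ofReal ((2:ℝ)^B * ρ^(A+B)) * (ENNReal.ofReal q)^j * (v * M))
      = ENNReal.ofReal ((2:ℝ)^B * (1-q)⁻¹ * V * ρ^(A+B)) * M := by
    rw [ENNReal.tsum_mul_right]
    rw [ENNReal.tsum_mul_left, ENNReal.tsum_geometric]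
    have h1 : (1:ℝ≥0∞) - ENNReal.ofReal q = ENNReal.ofReal (1-q) := by
      rw [← ENNReal.ofReal_one, ← ENNReal.ofReal_sub _ hq0.le]
    rw [h1, ← ENNReal.ofReal_inv_of_pos h1q]
    have h2 : v = ENNReal.ofReal V := by rw [hV_def, ENNReal.ofReal_toReal hvt]
    rw [h2, ← ENNReal.ofReal_mul (by positivity), ← mul_assoc,
        ← ENNReal.ofReal_mul (by positivity)]
    ring_nf
  calc (∫⁻ z in {z : ℝ × Spc d | 0 ≤ z.1 ∧ z.1 ≤ ‖z.2‖ ^ α ∧ ρ ≤ ‖z.2‖},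
        ENNReal.ofReal (‖z.2‖ ^ A * f z))
      ≤ ∫⁻ z in ⋃ j, S j, ENNReal.ofReal (‖z.2‖ ^ A * f z) := lintegral_mono_set hcover
    _ ≤ ∑' j : ℕ, ∫⁻ z in S j, ENNReal.ofReal (‖z.2‖ ^ A * f z) := lintegral_iUnion_le _ _
    _ ≤ ∑' j : ℕ, ENNReal.ofReal ((2:ℝ)^B * ρ^(A+B)) * (ENNReal.ofReal q)^j * (v * M) :=
        ENNReal.tsum_le_tsum hkey
    _ = ENNReal.ofReal ((2:ℝ)^B * (1-q)⁻¹ * V * ρ^(A+B)) * M := hsum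
    _ = ENNReal.ofReal ((2:ℝ)^B * (1-q)⁻¹ * V * ρ^(α * γ / 2 - β)) * M := by rw [hAB]
end
end

section
/- Let d ≥ 2 be an integer, 1 < α < 2, 0 < γ ≤ 2. There exists a constant N > 0, depending only on d, α, γ, such that for every nonnegative f ∈ C_c(ℝ^{d+1}) and every ρ > 0, ∫∫_{{(s,y) : 0 ≤ s ≤ |y|^α, |y| ≤ ρ}} |y|^{αγ/2 − d − α} f(s,y) dy ds ≤ N ρ^{αγ/2} M f(0,0). -/
open MeasureTheory ENNReal Set Filter

noncomputable section

/-!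
Cut the region dyadically in `|y|`. On the annulus `ρ 2^{-k-1} < |y| ≤ ρ 2^{-k}` the weight
`|y|^{β-d-α}` (with `β = αγ/2 ≤ α + d`) is at most `(ρ 2^{-k-1})^{β-d-α}`, and since `s ≤ |y|^α`
the annulus lies in the cylinder `C_{ρ 2^{-k}}(0,0)`, on which the integral of `f` is at most
`|C_{ρ 2^{-k}}| M f(0,0) = |B_1| (ρ 2^{-k})^{α+d} M f(0,0)`. The `k`-th piece is therefore bounded by
`2^{α+d-β} |B_1| (ρ 2^{-k})^β M f(0,0)`, a geometric series because `β > 0`. The only part of the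
region missed by the annuli is `y = 0`, which forces `s = 0`: a null set.
-/

namespace NearField

variable {d : ℕ} {α β ρ r t : ℝ} {x : Spc d} {F : ℝ × Spc d → ℝ≥0∞}

theorem cylP_eq_prod (d : ℕ) (α r t : ℝ) (x : Spc d) :
    cylP d α r t x = Icc t (t + r ^ α) ×ˢ Metric.closedBall x r := by
  ext p
  simp [cylP, Metric.mem_closedBall, and_assoc]

theorem volume_cylP (hr : 0 ≤ r) :
    volume (cylP d α r t x) =
      ENNReal.ofReal (r ^ α * r ^ d) * volume (Metric.closedBall (0 : Spc d) 1) := by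
  rw [cylP_eq_prod, Measure.volume_eq_prod, Measure.prod_prod, Real.volume_Icc,
    Measure.addHaar_closedBall' volume x hr, finrank_euclideanSpace_fin, ← mul_assoc,
    add_sub_cancel_left, ← ENNReal.ofReal_mul (Real.rpow_nonneg hr α)]

theorem cylAvg_le_maxFun (hr : 0 < r) : cylAvg d α r t x F ≤ maxFun d α 0 F t x := by
  refine le_trans ?_ (le_iSup₂ (f := fun (r : ℝ) (_ : 0 < r) =>
    ENNReal.ofReal (r ^ (0 : ℝ)) * cylAvg d α r t x F) r hr)
  simp

theorem setLIntegral_cylP_le (hr : 0 < r) :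
    ∫⁻ z in cylP d α r t x, F z ≤ volume (cylP d α r t x) * maxFun d α 0 F t x := by
  have hvol : volume (cylP d α r t x) ≠ 0 := by
    rw [volume_cylP hr.le]
    exact mul_ne_zero (ENNReal.ofReal_pos.mpr (by positivity)).ne'
      (Metric.measure_closedBall_pos volume 0 one_pos).ne'
  have hfin : volume (cylP d α r t x) ≠ ⊤ := by
    rw [cylP_eq_prod, Measure.volume_eq_prod, Measure.prod_prod]
    exact ENNReal.mul_ne_top measure_Icc_lt_top.ne measure_closedBall_lt_top.ne
  calc ∫⁻ z in cylP d α r t x, F z = volume (cylP d α r t x) * cylAvg d α r t x F := by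
        rw [cylAvg, ← mul_assoc, ENNReal.mul_inv_cancel hvol hfin, one_mul]
    _ ≤ _ := by gcongr; exact cylAvg_le_maxFun hr

def nearAnnulus (d : ℕ) (α r : ℝ) : Set (ℝ × Spc d) :=
  {z | 0 ≤ z.1 ∧ z.1 ≤ ‖z.2‖ ^ α ∧ r / 2 < ‖z.2‖ ∧ ‖z.2‖ ≤ r}

theorem nearAnnulus_subset_cylP (hα : 0 ≤ α) : nearAnnulus d α r ⊆ cylP d α r 0 0 := by
  rintro ⟨s, y⟩ ⟨hs, hsy, -, hyr⟩
  refine ⟨hs, ?_, by simpa using hyr⟩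
  rw [zero_add]
  exact hsy.trans (Real.rpow_le_rpow (norm_nonneg y) hyr hα)

theorem half_rpow_mul_cylinder_scale (hr : 0 < r) :
    (r / 2) ^ (β - d - α) * (r ^ α * r ^ d) = 2 ^ (α + d - β) * r ^ β := by
  rw [Real.div_rpow hr.le zero_le_two, ← Real.rpow_natCast, div_eq_mul_inv,
    ← Real.rpow_neg zero_le_two, mul_comm (r ^ _), mul_assoc, ← Real.rpow_add hr,
    ← Real.rpow_add hr]
  congr 2 <;> ring

theorem setLIntegral_nearAnnulus_le (hα : 0 < α) (hβ : β ≤ α + d) (hF : Measurable F)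
    (hr : 0 < r) :
    ∫⁻ z in nearAnnulus d α r, ENNReal.ofReal (‖z.2‖ ^ (β - d - α)) * F z ≤
      ENNReal.ofReal (2 ^ (α + d - β) * r ^ β) * volume (Metric.closedBall (0 : Spc d) 1) *
        maxFun d α 0 F 0 0 := by
  have hweight : ∀ z ∈ nearAnnulus d α r, ‖z.2‖ ^ (β - d - α) ≤ (r / 2) ^ (β - d - α) :=
    fun z hz => Real.rpow_le_rpow_of_nonpos (by positivity) hz.2.2.1.le (by linarith)
  calc ∫⁻ z in nearAnnulus d α r, ENNReal.ofReal (‖z.2‖ ^ (β - d - α)) * F z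
      ≤ ∫⁻ z in nearAnnulus d α r, ENNReal.ofReal ((r / 2) ^ (β - d - α)) * F z :=
        setLIntegral_mono (hF.const_mul _) fun z hz => by
          gcongr ENNReal.ofReal ?_ * _
          exact hweight z hz
    _ = ENNReal.ofReal ((r / 2) ^ (β - d - α)) * ∫⁻ z in nearAnnulus d α r, F z :=
        lintegral_const_mul' _ _ ENNReal.ofReal_ne_top
    _ ≤ ENNReal.ofReal ((r / 2) ^ (β - d - α)) * ∫⁻ z in cylP d α r 0 0, F z := by
        gcongr; exact nearAnnulus_subset_cylP hα.le
    _ ≤ ENNReal.ofReal ((r / 2) ^ (β - d - α)) *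
          (volume (cylP d α r 0 0) * maxFun d α 0 F 0 0) := by
        gcongr; exact setLIntegral_cylP_le hr
    _ = _ := by
        rw [volume_cylP hr.le, ← mul_assoc, ← mul_assoc,
          ← ENNReal.ofReal_mul (by positivity), half_rpow_mul_cylinder_scale hr]

theorem exists_dyadic_scale {a : ℝ} (ha : 0 < a) (haρ : a ≤ ρ) :
    ∃ k : ℕ, ρ / 2 ^ k / 2 < a ∧ a ≤ ρ / 2 ^ k := by
  obtain ⟨k, hk, hk'⟩ := exists_nat_pow_near ((one_le_div ha).mpr haρ) one_lt_two
  refine ⟨k, ?_, ?_⟩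
  · rw [div_div, ← pow_succ, div_lt_iff₀ (by positivity), mul_comm]
    exact (div_lt_iff₀ ha).mp hk'
  · rw [le_div_iff₀ (by positivity), mul_comm]
    exact (le_div_iff₀ ha).mp hk

theorem ae_subset_iUnion_nearAnnulus (hα : 0 < α) :
    {z : ℝ × Spc d | 0 ≤ z.1 ∧ z.1 ≤ ‖z.2‖ ^ α ∧ ‖z.2‖ ≤ ρ} ≤ᵐ[volume]
      ⋃ k : ℕ, nearAnnulus d α (ρ / 2 ^ k) := by
  refine ae_le_set.mpr (measure_mono_null (t := ({0} : Set ℝ) ×ˢ (univ : Set (Spc d))) ?_ ?_)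
  · rintro ⟨s, y⟩ ⟨⟨hs, hsy, hyρ⟩, hnot⟩
    rcases (norm_nonneg y).eq_or_lt with hy | hy
    · rw [← hy, Real.zero_rpow hα.ne'] at hsy
      exact ⟨le_antisymm hsy hs, mem_univ y⟩
    · obtain ⟨k, hk⟩ := exists_dyadic_scale hy hyρ
      exact (hnot (mem_iUnion.mpr ⟨k, hs, hsy, hk⟩)).elim
  · rw [Measure.volume_eq_prod, Measure.prod_prod, Real.volume_singleton, zero_mul]

theorem two_rpow_neg_lt_one (hβ : 0 < β) : (2 : ℝ) ^ (-β) < 1 :=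
  Real.rpow_lt_one_of_one_lt_of_neg one_lt_two (neg_neg_of_pos hβ)

theorem tsum_ofReal_div_two_pow_rpow (hρ : 0 ≤ ρ) (hβ : 0 < β) :
    ∑' k : ℕ, ENNReal.ofReal ((ρ / 2 ^ k) ^ β) = ENNReal.ofReal (ρ ^ β * (1 - 2 ^ (-β))⁻¹) := by
  have hq := two_rpow_neg_lt_one hβ
  have hterm : ∀ k : ℕ, (ρ / 2 ^ k) ^ β = ρ ^ β * (2 ^ (-β)) ^ k := fun k => by
    rw [Real.div_rpow hρ (by positivity), ← Real.rpow_natCast, ← Real.rpow_natCast,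
      ← Real.rpow_mul zero_le_two, ← Real.rpow_mul zero_le_two, div_eq_mul_inv,
      ← Real.rpow_neg zero_le_two, ← mul_neg, mul_comm (k : ℝ)]
  simp_rw [hterm]
  rw [← ENNReal.ofReal_tsum_of_nonneg (fun k => by positivity)
      ((summable_geometric_of_lt_one (by positivity) hq).mul_left _),
    tsum_mul_left, tsum_geometric_of_lt_one (by positivity) hq]

def nearFieldConst (d : ℕ) (α β : ℝ) : ℝ :=
  2 ^ (α + d - β) * (1 - 2 ^ (-β))⁻¹ * (volume (Metric.closedBall (0 : Spc d) 1)).toReal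

theorem nearFieldConst_pos (hβ : 0 < β) : 0 < nearFieldConst d α β := by
  have hq := two_rpow_neg_lt_one hβ
  have hV : 0 < (volume (Metric.closedBall (0 : Spc d) 1)).toReal :=
    ENNReal.toReal_pos (Metric.measure_closedBall_pos volume 0 one_pos).ne'
      measure_closedBall_lt_top.ne
  exact mul_pos (mul_pos (by positivity) (inv_pos.mpr (sub_pos.mpr hq))) hV

theorem setLIntegral_nearRegion_le (hα : 0 < α) (hβ0 : 0 < β) (hβ : β ≤ α + d)
    (hF : Measurable F) (hρ : 0 < ρ) :
    ∫⁻ z in {z : ℝ × Spc d | 0 ≤ z.1 ∧ z.1 ≤ ‖z.2‖ ^ α ∧ ‖z.2‖ ≤ ρ},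
        ENNReal.ofReal (‖z.2‖ ^ (β - d - α)) * F z ≤
      ENNReal.ofReal (nearFieldConst d α β * ρ ^ β) * maxFun d α 0 F 0 0 := by
  calc _ ≤ ∫⁻ z in ⋃ k : ℕ, nearAnnulus d α (ρ / 2 ^ k),
          ENNReal.ofReal (‖z.2‖ ^ (β - d - α)) * F z :=
        lintegral_mono_set' (ae_subset_iUnion_nearAnnulus hα)
    _ ≤ ∑' k : ℕ, ∫⁻ z in nearAnnulus d α (ρ / 2 ^ k),
          ENNReal.ofReal (‖z.2‖ ^ (β - d - α)) * F z :=
        lintegral_iUnion_le _ _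
    _ ≤ ∑' k : ℕ, ENNReal.ofReal (2 ^ (α + d - β) * (ρ / 2 ^ k) ^ β) *
          volume (Metric.closedBall (0 : Spc d) 1) * maxFun d α 0 F 0 0 :=
        ENNReal.tsum_le_tsum fun k => setLIntegral_nearAnnulus_le hα hβ hF (by positivity)
    _ = ENNReal.ofReal (2 ^ (α + d - β)) * (∑' k : ℕ, ENNReal.ofReal ((ρ / 2 ^ k) ^ β)) *
          volume (Metric.closedBall (0 : Spc d) 1) * maxFun d α 0 F 0 0 := by
        simp_rw [ENNReal.ofReal_mul (by positivity : (0 : ℝ) ≤ 2 ^ (α + d - β)),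
          ENNReal.tsum_mul_right, ENNReal.tsum_mul_left]
    _ = _ := by
        have hinv : 0 ≤ (1 - (2 : ℝ) ^ (-β))⁻¹ :=
          inv_nonneg.mpr (sub_nonneg.mpr (two_rpow_neg_lt_one hβ0).le)
        conv_lhs => rw [tsum_ofReal_div_two_pow_rpow hρ.le hβ0,
          ← ENNReal.ofReal_toReal (measure_closedBall_lt_top (x := (0 : Spc d))).ne,
          ← ENNReal.ofReal_mul (by positivity), ← ENNReal.ofReal_mul (by positivity)]
        rw [nearFieldConst]
        congr 2
        ring

end NearField

theorem stmt_8_general (d : ℕ) (α γ : ℝ) (hα1 : 1 < α)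
    (hγ1 : 0 < γ) (hγ2 : γ ≤ 2) :
    ∃ N : ℝ, 0 < N ∧
      ∀ (f : ℝ × Spc d → ℝ), Continuous f → HasCompactSupport f → (∀ z, 0 ≤ f z) →
      ∀ (ρ : ℝ), 0 < ρ →
      (∫⁻ z in {z : ℝ × Spc d | 0 ≤ z.1 ∧ z.1 ≤ ‖z.2‖ ^ α ∧ ‖z.2‖ ≤ ρ},
          ENNReal.ofReal (‖z.2‖ ^ (α * γ / 2 - d - α) * f z)) ≤
        ENNReal.ofReal (N * ρ ^ (α * γ / 2)) *
          maxFun d α 0 (fun z => ENNReal.ofReal (f z)) 0 0 := by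
  have hα : 0 < α := by linarith
  have hβ0 : 0 < α * γ / 2 := by positivity
  have hβ : α * γ / 2 ≤ α + d := by nlinarith [(Nat.cast_nonneg d : (0 : ℝ) ≤ d)]
  refine ⟨NearField.nearFieldConst d α (α * γ / 2), NearField.nearFieldConst_pos hβ0, ?_⟩
  intro f hf _ _ ρ hρ
  simp_rw [ENNReal.ofReal_mul (Real.rpow_nonneg (norm_nonneg _) _)]
  exact NearField.setLIntegral_nearRegion_le hα hβ0 hβ hf.measurable.ennreal_ofReal hρ

/-- near-field estimate over the region `Q ∩ C_ρ(0,0)`, where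
`Q = {(s,y) : |y| ≥ s^{1/α}}`:
`∫∫_{0 ≤ s ≤ |y|^α, |y| ≤ ρ} |y|^{αγ/2-d-α} f(s,y) dy ds ≤ N ρ^{αγ/2} M f(0,0)`. -/
theorem stmt_8 (d : ℕ) (hd : 2 ≤ d) (α γ : ℝ) (hα1 : 1 < α) (hα2 : α < 2)
    (hγ1 : 0 < γ) (hγ2 : γ ≤ 2) :
    ∃ N : ℝ, 0 < N ∧
      ∀ (f : ℝ × Spc d → ℝ), Continuous f → HasCompactSupport f → (∀ z, 0 ≤ f z) →
      ∀ (ρ : ℝ), 0 < ρ →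
      (∫⁻ z in {z : ℝ × Spc d | 0 ≤ z.1 ∧ z.1 ≤ ‖z.2‖ ^ α ∧ ‖z.2‖ ≤ ρ},
          ENNReal.ofReal (‖z.2‖ ^ (α * γ / 2 - d - α) * f z)) ≤
        ENNReal.ofReal (N * ρ ^ (α * γ / 2)) *
          maxFun d α 0 (fun z => ENNReal.ofReal (f z)) 0 0 :=
  stmt_8_general d α γ hα1 hγ1 hγ2
end
end

section
/- Let d ≥ 2 be an integer, 1 < α < 2, and 0 < ε < d − 1. Define b : ℝ^{d+1} → [0,∞] by b(t,x) := κ |x|^{−α+1} for x ≠ 0 (any value at x = 0), where κ > 0. Then there exists a constant c ∈ (0,∞), depending only on d and ε, such that ‖b^{1/(α−1)}‖_{E_{1+ε}} = c · κ^{1/(α−1)}. In particular, the parabolic Morrey norm ‖b^{1/(α−1)}‖_{E_{1+ε}} is finite and proportional to κ^{1/(α−1)}. -/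
open MeasureTheory ENNReal Set Filter

noncomputable section

namespace Stmt14Aux

open Metric

lemma real_pow_aux {R q s : ℝ} (hR : 0 < R) (k : ℕ) :
    (R / 2 ^ (k+1)) ^ (-q) * (R / 2 ^ k) ^ (s + q) =
      R ^ s * 2 ^ q * ((2:ℝ) ^ (-s)) ^ k := by
  have h2 : (0:ℝ) < 2 := two_pos
  have hb1 : (0:ℝ) < R / 2 ^ (k+1) := by positivity
  have hb2 : (0:ℝ) < R / 2 ^ k := by positivity
  have hlog : ∀ n : ℕ, Real.log (R / 2 ^ n) = Real.log R - n * Real.log 2 := by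
    intro n
    rw [Real.log_div hR.ne' (by positivity), Real.log_pow]
  rw [Real.rpow_def_of_pos hb1, Real.rpow_def_of_pos hb2, Real.rpow_def_of_pos hR,
    Real.rpow_def_of_pos h2, Real.rpow_def_of_pos h2, ← Real.exp_nat_mul,
    ← Real.exp_add, ← Real.exp_add, ← Real.exp_add, hlog, hlog]
  congr 1
  push_cast
  ring

variable {d : ℕ}

lemma spc_nontrivial (hd : 2 ≤ d) : Nontrivial (Spc d) := by
  have : (EuclideanSpace.single (⟨0, by omega⟩ : Fin d) (1:ℝ)) ≠ 0 := by
    intro h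
    have := congrArg (fun z => z (⟨0, by omega⟩ : Fin d)) h
    simp [EuclideanSpace.single_apply] at this
  exact nontrivial_of_ne _ _ this

lemma ball_lintegral_bound (hd : 2 ≤ d) {q : ℝ} (hq : 0 < q) {R : ℝ} (hR : 0 < R) :
    ∫⁻ y in closedBall (0 : Spc d) R, ENNReal.ofReal (‖y‖ ^ (-q)) ≤
      ENNReal.ofReal (R ^ ((d:ℝ) - q)) * (ENNReal.ofReal (2 ^ q) *
        volume (ball (0 : Spc d) 1) * (1 - ENNReal.ofReal (2 ^ (-((d:ℝ) - q))))⁻¹) := by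
  haveI := spc_nontrivial hd
  classical
  set V := volume (ball (0 : Spc d) 1) with hV
  set s : ℝ := (d:ℝ) - q with hs
  set A : ℕ → Set (Spc d) := fun k => closedBall 0 (R / 2 ^ k) \ ball 0 (R / 2 ^ (k+1)) with hA
  have hcover : closedBall (0 : Spc d) R \ {0} ⊆ ⋃ k, A k := by
    intro y hy
    obtain ⟨hy1, hy2⟩ := hy
    have hy0 : 0 < ‖y‖ := by
      simpa [norm_pos_iff] using hy2
    have hyR : ‖y‖ ≤ R := by simpa [mem_closedBall, dist_zero_right] using hy1
    have hex : ∃ k : ℕ, R / 2 ^ (k+1) ≤ ‖y‖ := by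
      obtain ⟨k, hk⟩ := pow_unbounded_of_one_lt (R / ‖y‖) (one_lt_two (α := ℝ))
      refine ⟨k, ?_⟩
      have : R / 2 ^ (k+1) ≤ R / 2 ^ k := by
        apply div_le_div_of_nonneg_left hR.le (by positivity)
        exact pow_le_pow_right₀ one_le_two (Nat.le_succ k)
      refine this.trans ?_
      rw [div_le_iff₀ (by positivity)]
      rw [div_lt_iff₀ hy0] at hk
      nlinarith [hy0]
    set k := Nat.find hex with hk
    have hk1 : R / 2 ^ (k+1) ≤ ‖y‖ := Nat.find_spec hex
    have hk2 : ‖y‖ ≤ R / 2 ^ k := by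
      rcases Nat.eq_zero_or_pos k with h0 | h0
      · rw [h0]; simpa using hyR
      · have := Nat.find_min hex (m := k - 1) (by omega)
        push_neg at this
        have hkk : k - 1 + 1 = k := by omega
        rw [hkk] at this
        exact this.le
    exact mem_iUnion.2 ⟨k, ⟨by simpa [mem_closedBall, dist_zero_right] using hk2,
      by simp [mem_ball, dist_zero_right, not_lt, hk1]⟩⟩
  have hnull : volume ({0} : Set (Spc d)) = 0 := measure_singleton 0
  have step1 : ∫⁻ y in closedBall (0 : Spc d) R, ENNReal.ofReal (‖y‖ ^ (-q)) =
      ∫⁻ y in closedBall (0 : Spc d) R \ {0}, ENNReal.ofReal (‖y‖ ^ (-q)) := by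
    refine (setLIntegral_congr ?_).symm
    exact diff_ae_eq_self.2 (measure_mono_null inter_subset_right hnull)
  rw [step1]
  have step2 : ∫⁻ y in closedBall (0 : Spc d) R \ {0}, ENNReal.ofReal (‖y‖ ^ (-q)) ≤
      ∑' k, ∫⁻ y in A k, ENNReal.ofReal (‖y‖ ^ (-q)) :=
    (lintegral_mono_set hcover).trans (lintegral_iUnion_le _ _)
  refine step2.trans ?_
  have hterm : ∀ k : ℕ, ∫⁻ y in A k, ENNReal.ofReal (‖y‖ ^ (-q)) ≤
      ENNReal.ofReal (R ^ s * 2 ^ q) * ENNReal.ofReal (2 ^ (-s)) ^ k * V := by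
    intro k
    have hb1 : (0:ℝ) < R / 2 ^ (k+1) := by positivity
    have hbd : ∀ y ∈ A k, ENNReal.ofReal (‖y‖ ^ (-q)) ≤
        ENNReal.ofReal ((R / 2 ^ (k+1)) ^ (-q)) := by
      intro y hy
      obtain ⟨hy1, hy2⟩ := hy
      have : R / 2 ^ (k+1) ≤ ‖y‖ := by
        simpa [mem_ball, dist_zero_right, not_lt] using hy2
      exact ENNReal.ofReal_le_ofReal
        (Real.rpow_le_rpow_of_nonpos hb1 this (neg_nonpos.2 hq.le))
    calc ∫⁻ y in A k, ENNReal.ofReal (‖y‖ ^ (-q))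
        ≤ ∫⁻ _ in A k, ENNReal.ofReal ((R / 2 ^ (k+1)) ^ (-q)) :=
          setLIntegral_mono' (measurableSet_closedBall.diff measurableSet_ball) hbd
      _ = ENNReal.ofReal ((R / 2 ^ (k+1)) ^ (-q)) * volume (A k) := setLIntegral_const _ _
      _ ≤ ENNReal.ofReal ((R / 2 ^ (k+1)) ^ (-q)) * volume (closedBall (0:Spc d) (R / 2 ^ k)) := by
          exact mul_le_mul_right (measure_mono diff_subset) _
      _ = ENNReal.ofReal ((R / 2 ^ (k+1)) ^ (-q)) *
            (ENNReal.ofReal ((R / 2 ^ k) ^ (d:ℕ)) * V) := by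
          rw [Measure.addHaar_closedBall volume 0 (by positivity), finrank_euclideanSpace_fin]
      _ = ENNReal.ofReal ((R / 2 ^ (k+1)) ^ (-q) * (R / 2 ^ k) ^ (s+q)) * V := by
          rw [← mul_assoc, ← ENNReal.ofReal_mul (by positivity)]
          congr 2
          rw [← Real.rpow_natCast (R / 2 ^ k) d]
          congr 1
          rw [hs]; ring
      _ = ENNReal.ofReal (R ^ s * 2 ^ q) * ENNReal.ofReal (2 ^ (-s)) ^ k * V := by
          rw [real_pow_aux hR k, ENNReal.ofReal_mul (by positivity),
            ENNReal.ofReal_pow (by positivity)]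
  calc ∑' k, ∫⁻ y in A k, ENNReal.ofReal (‖y‖ ^ (-q))
      ≤ ∑' k, ENNReal.ofReal (R ^ s * 2 ^ q) * ENNReal.ofReal (2 ^ (-s)) ^ k * V :=
        ENNReal.tsum_le_tsum hterm
    _ = ENNReal.ofReal (R ^ s * 2 ^ q) * (1 - ENNReal.ofReal (2 ^ (-s)))⁻¹ * V := by
        rw [ENNReal.tsum_mul_right, ENNReal.tsum_mul_left, ENNReal.tsum_geometric]
    _ = ENNReal.ofReal (R ^ s) * (ENNReal.ofReal (2 ^ q) * V * (1 - ENNReal.ofReal (2 ^ (-s)))⁻¹) := by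
        rw [ENNReal.ofReal_mul (by positivity)]
        ring

/-- The constant `M` for the per-term upper bound. -/
def bigM (d : ℕ) (q : ℝ) : ℝ≥0∞ :=
  1 + ENNReal.ofReal (3 ^ ((d:ℝ) - q)) * (ENNReal.ofReal (2 ^ q) *
    volume (ball (0 : Spc d) 1) * (1 - ENNReal.ofReal (2 ^ (-((d:ℝ) - q))))⁻¹) *
    (volume (ball (0 : Spc d) 1))⁻¹

lemma bigM_ne_top (hd : 2 ≤ d) {q : ℝ} (hq : 0 < q) (hqd : q < d) : bigM d q ≠ ⊤ := by
  haveI := spc_nontrivial hd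
  have hV0 : volume (ball (0 : Spc d) 1) ≠ 0 :=
    (measure_ball_pos volume 0 one_pos).ne'
  have hVtop : volume (ball (0 : Spc d) 1) ≠ ⊤ := measure_ball_lt_top.ne
  have hr : ENNReal.ofReal (2 ^ (-((d:ℝ) - q))) < 1 := by
    rw [← ENNReal.ofReal_one]
    exact ENNReal.ofReal_lt_ofReal_iff_of_nonneg (by positivity) |>.2
      (Real.rpow_lt_one_of_one_lt_of_neg one_lt_two (by linarith))
  have hsub : (1 - ENNReal.ofReal (2 ^ (-((d:ℝ) - q))))⁻¹ ≠ ⊤ := by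
    rw [Ne, ENNReal.inv_eq_top]
    exact (tsub_pos_of_lt hr).ne'
  apply ENNReal.add_ne_top.2
  refine ⟨ENNReal.one_ne_top, ?_⟩
  exact ENNReal.mul_ne_top (ENNReal.mul_ne_top ENNReal.ofReal_ne_top
    (ENNReal.mul_ne_top (ENNReal.mul_ne_top ENNReal.ofReal_ne_top hVtop) hsub))
    (ENNReal.inv_ne_top.2 hV0)

lemma term_upper (hd : 2 ≤ d) {q : ℝ} (hq : 0 < q) (hqd : q < d) {ρ : ℝ} (hρ : 0 < ρ)
    (x : Spc d) :
    ENNReal.ofReal ρ * ((volume (closedBall x ρ))⁻¹ *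
      ∫⁻ y in closedBall x ρ, ENNReal.ofReal (‖y‖ ^ (-q))) ^ (1/q) ≤ (bigM d q) ^ (1/q) := by
  haveI := spc_nontrivial hd
  set V := volume (ball (0 : Spc d) 1) with hVdef
  have hV0 : V ≠ 0 := (measure_ball_pos volume 0 one_pos).ne'
  have hVtop : V ≠ ⊤ := measure_ball_lt_top.ne
  have hcb : volume (closedBall x ρ) = ENNReal.ofReal (ρ ^ (d:ℕ)) * V := by
    rw [Measure.addHaar_closedBall volume x hρ.le, finrank_euclideanSpace_fin]
  have hcb0 : volume (closedBall x ρ) ≠ 0 := (measure_closedBall_pos volume x hρ).ne'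
  have hcbtop : volume (closedBall x ρ) ≠ ⊤ := measure_closedBall_lt_top.ne
  have key : (volume (closedBall x ρ))⁻¹ *
      (∫⁻ y in closedBall x ρ, ENNReal.ofReal (‖y‖ ^ (-q))) ≤
      ENNReal.ofReal (ρ ^ (-q)) * bigM d q := by
    rcases le_or_gt (2 * ρ) ‖x‖ with hcase | hcase
    · -- far from origin: integrand ≤ ρ^{-q}
      have hbd : ∀ y ∈ closedBall x ρ, ENNReal.ofReal (‖y‖ ^ (-q)) ≤
          ENNReal.ofReal (ρ ^ (-q)) := by
        intro y hy
        have h1 : ρ ≤ ‖y‖ := by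
          have := mem_closedBall.1 hy
          have h2 : ‖x‖ - ‖y‖ ≤ ρ := by
            calc ‖x‖ - ‖y‖ ≤ ‖y - x‖ := by
                  have := norm_sub_norm_le x y
                  have h3 : ‖x - y‖ = ‖y - x‖ := norm_sub_rev x y
                  linarith [norm_sub_norm_le x y, h3 ▸ (le_refl ‖x - y‖)]
              _ = dist y x := (dist_eq_norm y x).symm
              _ ≤ ρ := this
          linarith
        exact ENNReal.ofReal_le_ofReal
          (Real.rpow_le_rpow_of_nonpos hρ h1 (neg_nonpos.2 hq.le))
      have hint : (∫⁻ y in closedBall x ρ, ENNReal.ofReal (‖y‖ ^ (-q))) ≤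
          ENNReal.ofReal (ρ ^ (-q)) * volume (closedBall x ρ) := by
        calc (∫⁻ y in closedBall x ρ, ENNReal.ofReal (‖y‖ ^ (-q)))
            ≤ ∫⁻ _ in closedBall x ρ, ENNReal.ofReal (ρ ^ (-q)) :=
              setLIntegral_mono' measurableSet_closedBall hbd
          _ = ENNReal.ofReal (ρ ^ (-q)) * volume (closedBall x ρ) := setLIntegral_const _ _
      calc (volume (closedBall x ρ))⁻¹ * (∫⁻ y in closedBall x ρ, ENNReal.ofReal (‖y‖ ^ (-q)))
          ≤ (volume (closedBall x ρ))⁻¹ *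
            (ENNReal.ofReal (ρ ^ (-q)) * volume (closedBall x ρ)) :=
            mul_le_mul_right hint _
        _ = ENNReal.ofReal (ρ ^ (-q)) := by
            rw [mul_comm (ENNReal.ofReal (ρ ^ (-q)))]
            rw [← mul_assoc, ENNReal.inv_mul_cancel hcb0 hcbtop, one_mul]
        _ ≤ ENNReal.ofReal (ρ ^ (-q)) * bigM d q := by
            nth_rewrite 1 [← mul_one (ENNReal.ofReal (ρ ^ (-q)))]
            exact mul_le_mul_right (le_add_right le_rfl) _
    · -- near origin: closedBall x ρ ⊆ closedBall 0 (3ρ)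
      have hsub : closedBall x ρ ⊆ closedBall (0 : Spc d) (3 * ρ) := by
        intro y hy
        rw [mem_closedBall, dist_zero_right]
        calc ‖y‖ = ‖y - x + x‖ := by rw [sub_add_cancel]
          _ ≤ ‖y - x‖ + ‖x‖ := norm_add_le _ _
          _ ≤ ρ + 2 * ρ := by
              refine add_le_add ?_ hcase.le
              rw [← dist_eq_norm]
              exact mem_closedBall.1 hy
          _ = 3 * ρ := by ring
      have hI : (∫⁻ y in closedBall x ρ, ENNReal.ofReal (‖y‖ ^ (-q))) ≤
          ENNReal.ofReal ((3*ρ) ^ ((d:ℝ) - q)) * (ENNReal.ofReal (2 ^ q) * V *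
            (1 - ENNReal.ofReal (2 ^ (-((d:ℝ) - q))))⁻¹) :=
        (lintegral_mono_set hsub).trans (ball_lintegral_bound hd hq (by positivity))
      set K := ENNReal.ofReal (2 ^ q) * V * (1 - ENNReal.ofReal (2 ^ (-((d:ℝ) - q))))⁻¹ with hK
      have h3ρ : ENNReal.ofReal ((3*ρ) ^ ((d:ℝ) - q)) =
          ENNReal.ofReal (3 ^ ((d:ℝ) - q)) * ENNReal.ofReal (ρ ^ ((d:ℝ) - q)) := by
        rw [Real.mul_rpow (by norm_num) hρ.le, ENNReal.ofReal_mul (by positivity)]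
      have hsplit : ENNReal.ofReal (ρ ^ ((d:ℝ) - q)) =
          ENNReal.ofReal (ρ ^ (d:ℕ)) * ENNReal.ofReal (ρ ^ (-q)) := by
        rw [← ENNReal.ofReal_mul (by positivity)]
        congr 1
        rw [← Real.rpow_natCast ρ d, ← Real.rpow_add hρ]
        ring_nf
      calc (volume (closedBall x ρ))⁻¹ * (∫⁻ y in closedBall x ρ, ENNReal.ofReal (‖y‖ ^ (-q)))
          ≤ (volume (closedBall x ρ))⁻¹ * (ENNReal.ofReal ((3*ρ) ^ ((d:ℝ) - q)) * K) :=
            mul_le_mul_right hI _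
        _ = ENNReal.ofReal (ρ ^ (-q)) *
            (ENNReal.ofReal (3 ^ ((d:ℝ) - q)) * K * V⁻¹) := by
            rw [hcb, h3ρ, hsplit, ENNReal.mul_inv (Or.inl (by positivity)) (Or.inl ENNReal.ofReal_ne_top)]
            have hone : (ENNReal.ofReal (ρ ^ (d:ℕ)))⁻¹ * ENNReal.ofReal (ρ ^ (d:ℕ)) = 1 :=
              ENNReal.inv_mul_cancel (by positivity) ENNReal.ofReal_ne_top
            calc (ENNReal.ofReal (ρ ^ (d:ℕ)))⁻¹ * V⁻¹ *
                (ENNReal.ofReal (3 ^ ((d:ℝ) - q)) *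
                  (ENNReal.ofReal (ρ ^ (d:ℕ)) * ENNReal.ofReal (ρ ^ (-q))) * K)
                = ((ENNReal.ofReal (ρ ^ (d:ℕ)))⁻¹ * ENNReal.ofReal (ρ ^ (d:ℕ))) *
                  (ENNReal.ofReal (ρ ^ (-q)) *
                    (ENNReal.ofReal (3 ^ ((d:ℝ) - q)) * K * V⁻¹)) := by ring
              _ = ENNReal.ofReal (ρ ^ (-q)) *
                  (ENNReal.ofReal (3 ^ ((d:ℝ) - q)) * K * V⁻¹) := by rw [hone, one_mul]
        _ ≤ ENNReal.ofReal (ρ ^ (-q)) * bigM d q := by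
            refine mul_le_mul_right ?_ _
            exact le_add_left le_rfl
  calc ENNReal.ofReal ρ * ((volume (closedBall x ρ))⁻¹ *
        ∫⁻ y in closedBall x ρ, ENNReal.ofReal (‖y‖ ^ (-q))) ^ (1/q)
      ≤ ENNReal.ofReal ρ * (ENNReal.ofReal (ρ ^ (-q)) * bigM d q) ^ (1/q) := by
        exact mul_le_mul_right (ENNReal.rpow_le_rpow key (by positivity)) _
    _ = (ENNReal.ofReal ρ * ENNReal.ofReal (ρ ^ (-q)) ^ (1/q)) * (bigM d q) ^ (1/q) := by
        rw [ENNReal.mul_rpow_of_nonneg _ _ (by positivity)]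
        ring
    _ = (bigM d q) ^ (1/q) := by
        have : ENNReal.ofReal (ρ ^ (-q)) ^ (1/q) = ENNReal.ofReal ρ⁻¹ := by
          rw [ENNReal.ofReal_rpow_of_pos (Real.rpow_pos_of_pos hρ _),
            ← Real.rpow_mul hρ.le]
          rw [show -q * (1/q) = -1 by field_simp]
          rw [Real.rpow_neg_one]
        rw [this, ← ENNReal.ofReal_mul hρ.le, mul_inv_cancel₀ hρ.ne', ENNReal.ofReal_one,
          one_mul]

lemma term_lower (hd : 2 ≤ d) {q : ℝ} (hq : 0 < q) :
    1 ≤ ENNReal.ofReal (1:ℝ) * ((volume (closedBall (0:Spc d) 1))⁻¹ *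
      ∫⁻ y in closedBall (0:Spc d) 1, ENNReal.ofReal (‖y‖ ^ (-q))) ^ (1/q) := by
  haveI := spc_nontrivial hd
  have hcb0 : volume (closedBall (0:Spc d) 1) ≠ 0 :=
    (measure_closedBall_pos volume 0 one_pos).ne'
  have hcbtop : volume (closedBall (0:Spc d) 1) ≠ ⊤ := measure_closedBall_lt_top.ne
  have hint : volume (closedBall (0:Spc d) 1) ≤
      ∫⁻ y in closedBall (0:Spc d) 1, ENNReal.ofReal (‖y‖ ^ (-q)) := by
    calc volume (closedBall (0:Spc d) 1)
        = volume (closedBall (0:Spc d) 1 \ {0}) :=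
          (measure_diff_null (measure_singleton 0)).symm
      _ = ∫⁻ _ in closedBall (0:Spc d) 1 \ {0}, 1 := by
          rw [setLIntegral_one]
      _ ≤ ∫⁻ y in closedBall (0:Spc d) 1 \ {0}, ENNReal.ofReal (‖y‖ ^ (-q)) := by
          refine setLIntegral_mono' (measurableSet_closedBall.diff (measurableSet_singleton _))
            fun y hy => ?_
          obtain ⟨hy1, hy2⟩ := hy
          have hy0 : 0 < ‖y‖ := by simpa [norm_pos_iff] using hy2
          have hy1' : ‖y‖ ≤ 1 := by simpa [mem_closedBall, dist_zero_right] using hy1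
          rw [← ENNReal.ofReal_one]
          exact ENNReal.ofReal_le_ofReal
            (Real.one_le_rpow_of_pos_of_le_one_of_nonpos hy0 hy1' (neg_nonpos.2 hq.le))
      _ ≤ ∫⁻ y in closedBall (0:Spc d) 1, ENNReal.ofReal (‖y‖ ^ (-q)) :=
          lintegral_mono_set diff_subset
  have h1 : (1:ℝ≥0∞) ≤ (volume (closedBall (0:Spc d) 1))⁻¹ *
      ∫⁻ y in closedBall (0:Spc d) 1, ENNReal.ofReal (‖y‖ ^ (-q)) := by
    rw [← ENNReal.inv_mul_cancel hcb0 hcbtop]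
    exact mul_le_mul_right hint _
  calc (1:ℝ≥0∞) = 1 ^ (1/q) := (ENNReal.one_rpow _).symm
    _ ≤ ((volume (closedBall (0:Spc d) 1))⁻¹ *
        ∫⁻ y in closedBall (0:Spc d) 1, ENNReal.ofReal (‖y‖ ^ (-q))) ^ (1/q) :=
        ENNReal.rpow_le_rpow h1 (by positivity)
    _ = ENNReal.ofReal (1:ℝ) * _ := by rw [ENNReal.ofReal_one, one_mul]

lemma pointwise_aux {α κ : ℝ} (hα1 : 1 < α) (hκ : 0 < κ) {q : ℝ} (hq : 0 < q)
    {x : Spc d} (hx : x ≠ 0) :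
    (ENNReal.ofReal (κ * ‖x‖ ^ (-α + 1)) ^ (1/(α-1))) ^ q =
      ENNReal.ofReal (κ ^ (1/(α-1))) ^ q * ENNReal.ofReal (‖x‖ ^ (-q)) := by
  have hα : α - 1 ≠ 0 := by linarith
  have hx0 : 0 < ‖x‖ := norm_pos_iff.2 hx
  have hα0 : (0:ℝ) < α - 1 := by linarith
  rw [← ENNReal.rpow_mul, ENNReal.ofReal_mul hκ.le,
    ENNReal.mul_rpow_of_nonneg _ _ (by positivity)]
  congr 1
  · rw [ENNReal.ofReal_rpow_of_pos hκ,
      ENNReal.ofReal_rpow_of_pos (Real.rpow_pos_of_pos hκ _), ← Real.rpow_mul hκ.le]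
  · rw [ENNReal.ofReal_rpow_of_pos (Real.rpow_pos_of_pos hx0 _), ← Real.rpow_mul hx0.le]
    rw [show (-α + 1) * (1/(α-1) * q) = -q by field_simp; ring]

lemma cylP_eq (d : ℕ) (α ρ t : ℝ) (x : Spc d) :
    cylP d α ρ t x = Set.Icc t (t + ρ ^ α) ×ˢ closedBall x ρ := by
  ext p
  simp [cylP, Set.mem_prod, mem_closedBall, Set.mem_Icc, and_assoc]

lemma cylAvg_snd (α : ℝ) {ρ : ℝ} (hρ : 0 < ρ) (t : ℝ) (x : Spc d)
    (g : Spc d → ℝ≥0∞) (hg : Measurable g) :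
    cylAvg d α ρ t x (fun p => g p.2) =
      (volume (closedBall x ρ))⁻¹ * ∫⁻ y in closedBall x ρ, g y := by
  have ha0 : ENNReal.ofReal (ρ ^ α) ≠ 0 := by
    simp [ENNReal.ofReal_eq_zero, not_le, Real.rpow_pos_of_pos hρ α]
  have hatop : ENNReal.ofReal (ρ ^ α) ≠ ⊤ := ENNReal.ofReal_ne_top
  have hcb0 : volume (closedBall x ρ) ≠ 0 := (measure_closedBall_pos volume x hρ).ne'
  have hcbtop : volume (closedBall x ρ) ≠ ⊤ := measure_closedBall_lt_top.ne
  have hvol : volume (cylP d α ρ t x) = ENNReal.ofReal (ρ ^ α) * volume (closedBall x ρ) := by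
    rw [cylP_eq, Measure.volume_eq_prod, Measure.prod_prod, Real.volume_Icc]
    congr 2
    ring
  have hint : (∫⁻ p in cylP d α ρ t x, g p.2) =
      (∫⁻ y in closedBall x ρ, g y) * ENNReal.ofReal (ρ ^ α) := by
    rw [cylP_eq, Measure.volume_eq_prod, ← Measure.prod_restrict,
      lintegral_prod (fun p => g p.2) ((hg.comp measurable_snd).aemeasurable)]
    simp only
    rw [lintegral_const, Measure.restrict_apply_univ, Real.volume_Icc]
    congr 2
    ring
  rw [cylAvg, hvol, hint,
    ENNReal.mul_inv (Or.inl ha0) (Or.inl hatop)]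
  have hone : (ENNReal.ofReal (ρ ^ α))⁻¹ * ENNReal.ofReal (ρ ^ α) = 1 :=
    ENNReal.inv_mul_cancel ha0 hatop
  calc (ENNReal.ofReal (ρ ^ α))⁻¹ * (volume (closedBall x ρ))⁻¹ *
      ((∫⁻ y in closedBall x ρ, g y) * ENNReal.ofReal (ρ ^ α))
      = ((ENNReal.ofReal (ρ ^ α))⁻¹ * ENNReal.ofReal (ρ ^ α)) *
        ((volume (closedBall x ρ))⁻¹ * ∫⁻ y in closedBall x ρ, g y) := by ring
    _ = (volume (closedBall x ρ))⁻¹ * ∫⁻ y in closedBall x ρ, g y := by rw [hone, one_mul]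

end Stmt14Aux

/-- Example (E.1), spatial case: for `b(t,x) = κ |x|^{-α+1}` (any value at
`x = 0`), the Morrey norm `‖b^{1/(α-1)}‖_{E_{1+ε}}` equals `c κ^{1/(α-1)}` with `c`
depending only on `d` and `ε`. -/
theorem stmt_14 (d : ℕ) (hd : 2 ≤ d) (ε : ℝ) (hε1 : 0 < ε) (hε2 : ε < d - 1) :
    ∃ c : ℝ, 0 < c ∧
      ∀ (α : ℝ), 1 < α → α < 2 → ∀ (κ : ℝ), 0 < κ →
      ∀ (b : ℝ × Spc d → ℝ≥0∞),
        (∀ (t : ℝ) (x : Spc d), x ≠ 0 → b (t, x) = ENNReal.ofReal (κ * ‖x‖ ^ (-α + 1))) →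
        morreyE d α (1 + ε) (fun z => b z ^ (1 / (α - 1))) =
          ENNReal.ofReal (c * κ ^ (1 / (α - 1))) := by
  classical
  have hq : (0:ℝ) < 1 + ε := by linarith
  have hqd : 1 + ε < (d:ℝ) := by linarith
  set S : ℝ≥0∞ := ⨆ (ρ : ℝ) (_ : 0 < ρ) (x : Spc d),
    ENNReal.ofReal ρ * ((volume (Metric.closedBall x ρ))⁻¹ *
      ∫⁻ y in Metric.closedBall x ρ, ENNReal.ofReal (‖y‖ ^ (-(1 + ε)))) ^ (1/(1 + ε)) with hSdef
  have hS_le : S ≤ (Stmt14Aux.bigM d (1 + ε)) ^ (1/(1 + ε)) := by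
    refine iSup_le fun ρ => iSup_le fun hρ => iSup_le fun x => ?_
    exact Stmt14Aux.term_upper hd hq hqd hρ x
  have hS_top : S ≠ ⊤ := by
    refine (hS_le.trans_lt ?_).ne
    exact ENNReal.rpow_lt_top_of_nonneg (by positivity)
      (Stmt14Aux.bigM_ne_top hd hq hqd)
  have hS_ge : 1 ≤ S := by
    refine (Stmt14Aux.term_lower hd hq).trans ?_
    rw [hSdef]
    exact le_iSup_of_le (1:ℝ) (le_iSup_of_le one_pos (le_iSup_of_le (0 : Spc d) le_rfl))
  refine ⟨S.toReal, ENNReal.toReal_pos (by intro h; rw [h] at hS_ge; simp at hS_ge) hS_top, ?_⟩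
  intro α hα1 hα2 κ hκ b hb
  have hα0 : (0:ℝ) < α - 1 := by linarith
  have hβ : (0:ℝ) < 1/(α-1) := by positivity
  have hmeas : Measurable (fun y : Spc d => ENNReal.ofReal (‖y‖ ^ (-(1 + ε)))) :=
    (measurable_norm.pow_const _).ennreal_ofReal
  set C : ℝ≥0∞ := ENNReal.ofReal (κ ^ (1/(α-1))) ^ (1 + ε) with hCdef
  -- the null set of points with vanishing space component
  have hN : volume {p : ℝ × Spc d | p.2 = 0} = 0 := by
    have hset : {p : ℝ × Spc d | p.2 = 0} = (Set.univ : Set ℝ) ×ˢ ({0} : Set (Spc d)) := by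
      ext p
      simp only [Set.mem_setOf_eq, Set.mem_prod, Set.mem_univ, Set.mem_singleton_iff, true_and]
    haveI := Stmt14Aux.spc_nontrivial hd
    rw [hset, Measure.volume_eq_prod, Measure.prod_prod, measure_singleton, mul_zero]
  have hae : (fun p : ℝ × Spc d => (b p ^ (1/(α-1))) ^ (1 + ε)) =ᵐ[volume]
      (fun p : ℝ × Spc d => C * ENNReal.ofReal (‖p.2‖ ^ (-(1 + ε)))) := by
    have h2 : ∀ᵐ p : ℝ × Spc d, p.2 ≠ 0 := by
      rw [ae_iff]
      have hss : {a : ℝ × Spc d | ¬ a.2 ≠ 0} = {p : ℝ × Spc d | p.2 = 0} := by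
        ext p; simp
      rw [hss]
      exact hN
    filter_upwards [h2] with p hp
    have hb' : b p = ENNReal.ofReal (κ * ‖p.2‖ ^ (-α + 1)) := by
      calc b p = b (p.1, p.2) := by rw [Prod.mk.eta]
        _ = ENNReal.ofReal (κ * ‖p.2‖ ^ (-α + 1)) := hb p.1 p.2 hp
    rw [hb', Stmt14Aux.pointwise_aux hα1 hκ hq hp]
  have hterm : ∀ (ρ : ℝ), 0 < ρ → ∀ (t : ℝ) (x : Spc d),
      ENNReal.ofReal ρ * (cylAvg d α ρ t x (fun p => (b p ^ (1/(α-1))) ^ (1 + ε))) ^ (1/(1 + ε)) =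
        ENNReal.ofReal (κ ^ (1/(α-1))) *
          (ENNReal.ofReal ρ * ((volume (Metric.closedBall x ρ))⁻¹ *
            ∫⁻ y in Metric.closedBall x ρ, ENNReal.ofReal (‖y‖ ^ (-(1 + ε)))) ^ (1/(1 + ε))) := by
    intro ρ hρ t x
    have havg : cylAvg d α ρ t x (fun p => (b p ^ (1/(α-1))) ^ (1 + ε)) =
        C * ((volume (Metric.closedBall x ρ))⁻¹ *
          ∫⁻ y in Metric.closedBall x ρ, ENNReal.ofReal (‖y‖ ^ (-(1 + ε)))) := by
      have e1 : cylAvg d α ρ t x (fun p => (b p ^ (1/(α-1))) ^ (1 + ε)) =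
          cylAvg d α ρ t x (fun p => C * ENNReal.ofReal (‖p.2‖ ^ (-(1 + ε)))) := by
        unfold cylAvg
        congr 1
        exact lintegral_congr_ae (ae_restrict_of_ae hae)
      rw [e1]
      have e2 := Stmt14Aux.cylAvg_snd (d := d) α hρ t x
        (fun y => C * ENNReal.ofReal (‖y‖ ^ (-(1 + ε)))) (hmeas.const_mul C)
      rw [e2, lintegral_const_mul C hmeas]
      ring
    rw [havg, ENNReal.mul_rpow_of_nonneg _ _ (by positivity), hCdef,
      ← ENNReal.rpow_mul, mul_one_div_cancel hq.ne', ENNReal.rpow_one]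
    ring
  calc morreyE d α (1 + ε) (fun z => b z ^ (1 / (α - 1)))
      = ⨆ (ρ : ℝ) (_ : 0 < ρ) (t : ℝ) (x : Spc d),
          ENNReal.ofReal (κ ^ (1/(α-1))) *
            (ENNReal.ofReal ρ * ((volume (Metric.closedBall x ρ))⁻¹ *
              ∫⁻ y in Metric.closedBall x ρ, ENNReal.ofReal (‖y‖ ^ (-(1 + ε)))) ^ (1/(1 + ε))) := by
        rw [morreyE]
        exact iSup_congr fun ρ => iSup_congr fun hρ => iSup_congr fun t =>
          iSup_congr fun x => hterm ρ hρ t x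
    _ = ENNReal.ofReal (κ ^ (1/(α-1))) * S := by
        rw [hSdef]
        simp_rw [ENNReal.mul_iSup, iSup_const]
    _ = ENNReal.ofReal (S.toReal * κ ^ (1/(α-1))) := by
        rw [ENNReal.ofReal_mul (ENNReal.toReal_nonneg), ENNReal.ofReal_toReal hS_top,
          mul_comm]
end
end
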